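/- If ⌊i_1/s_1⌋ + ... + ⌊i_m/s_m⌋ ≥ r, then there exists a polynomial over F with leading monomial X_1^{i_1}···X_m^{i_m} (with respect to a lexicographic ordering) all of whose zeros at the points of S_1 × ... × S_m have multiplicity at least r; in fact every point of S_1 × ... × S_m is a zero of multiplicity at least r. -/

import Mathlib

/-!
Take `F = ∏ⱼ (∏_{b ∈ Sⱼ} (Xⱼ - b))^⌊iⱼ/sⱼ⌋ · Xⱼ^(iⱼ mod sⱼ)`. Each factor is monic with leading
monomial `Xⱼ^iⱼ` for every monomial order, so `F` has leading monomial `X^I`. The Hasse derivatives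
of `F` at `a` are the Taylor coefficients of `F(X + a)`, which follows by induction on `F` from a
Pascal rule for `D^k (p · Xⱼ)`. For `a ∈ S₁ × ⋯ × Sₘ`, `F` is divisible by
`∏ⱼ (Xⱼ - aⱼ)^⌊iⱼ/sⱼ⌋`, whose translate by `a` is a monomial of total degree `∑ⱼ ⌊iⱼ/sⱼ⌋`; hence
every Taylor coefficient of smaller total degree vanishes.
-/

open MvPolynomial

/-- The `k`-th Hasse derivative of a multivariate polynomial `F`: the coefficient of
`Z^k` in `F(X+Z)`, given by `F^{(k)} = ∑_d ∏_i C(d_i, k_i) · coeff_d(F) · X^{d−k}`. -/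
noncomputable def mvHasseDeriv {σ K : Type*} [CommRing K] [DecidableEq σ]
    (k : σ →₀ ℕ) (F : MvPolynomial σ K) : MvPolynomial σ K :=
  ∑ d ∈ F.support,
    MvPolynomial.monomial (d - k)
      ((∏ i ∈ k.support, Nat.choose (d i) (k i) : ℕ) • F.coeff d)

/-- `multGE F a M` means that the multiplicity of `F` at the point `a` is at least `M`,
i.e. all Hasse derivatives of order `< M` vanish at `a`. -/
def multGE {σ K : Type*} [CommRing K] [DecidableEq σ]
    (F : MvPolynomial σ K) (a : σ → K) (M : ℕ) : Prop :=
  ∀ k : σ →₀ ℕ, (k.sum fun _ n => n) < M → MvPolynomial.eval a (mvHasseDeriv k F) = 0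

/-- The multiplicity of `F` at `a`: the largest `M` such that all Hasse derivatives of
order `< M` vanish at `a` (junk value `0` for the zero polynomial, whose multiplicity
is infinite). -/
noncomputable def multAt {σ K : Type*} [CommRing K] [DecidableEq σ]
    (F : MvPolynomial σ K) (a : σ → K) : ℕ :=
  sSup {M | multGE F a M}

open Finset

namespace Finsupp

variable {σ : Type*}

lemma prod_choose_eq_zero_of_not_le {n k : σ →₀ ℕ} (h : ¬k ≤ n) :
    (k.prod fun i a => (n i).choose a) = 0 := by
  obtain ⟨i, hi⟩ : ∃ i, n i < k i := by simpa [le_def] using h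
  exact Finset.prod_eq_zero (mem_support_iff.mpr (by omega)) (Nat.choose_eq_zero_of_lt hi)

lemma prod_choose_add_single_of_eq_zero (n k : σ →₀ ℕ) {j : σ} (hj : k j = 0) :
    (k.prod fun i a => ((n + single j 1 : σ →₀ ℕ) i).choose a) =
      k.prod fun i a => (n i).choose a := by
  refine Finset.prod_congr rfl fun i hi => ?_
  have : i ≠ j := by rintro rfl; exact mem_support_iff.mp hi hj
  simp [this.symm]

lemma prod_choose_add_single_add_single (n k : σ →₀ ℕ) (j : σ) :
    ((k + single j 1).prod fun i a => ((n + single j 1 : σ →₀ ℕ) i).choose a) =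
      ((k + single j 1).prod fun i a => (n i).choose a) + k.prod fun i a => (n i).choose a := by
  classical
  set s := insert j k.support
  have hk : k.support ⊆ s := Finset.subset_insert _ _
  have hkj : (k + single j 1).support ⊆ s :=
    support_add.trans (Finset.union_subset hk (support_single_subset.trans (by simp [s])))
  have hj : j ∈ s := Finset.mem_insert_self _ _
  simp only [prod_of_support_subset _ hk _ (fun _ _ => Nat.choose_zero_right _),
    prod_of_support_subset _ hkj _ (fun _ _ => Nat.choose_zero_right _),
    ← Finset.mul_prod_erase s _ hj]
  have hoff : ∀ i ∈ s.erase j, (k + single j 1 : σ →₀ ℕ) i = k i ∧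
      (n + single j 1 : σ →₀ ℕ) i = n i := by
    intro i hi
    simp [(Finset.ne_of_mem_erase hi).symm]
  rw [Finset.prod_congr rfl fun i hi => by rw [(hoff i hi).1, (hoff i hi).2],
    Finset.prod_congr rfl fun i hi => congrArg _ (hoff i hi).1]
  simp only [coe_add, Pi.add_apply, single_eq_same, Nat.choose_succ_succ', add_mul]
  ring

end Finsupp

section HasseDeriv

variable {σ R : Type*} [CommRing R] [DecidableEq σ]

lemma mvHasseDeriv_eq_sum (k : σ →₀ ℕ) (F : MvPolynomial σ R) :
    mvHasseDeriv k F = (AddMonoidAlgebra.coeff F).sum fun d c =>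
      monomial (d - k) ((k.prod fun i a => (d i).choose a) • c) := by
  rw [sum_def]
  rfl

lemma mvHasseDeriv_add (k : σ →₀ ℕ) (p q : MvPolynomial σ R) :
    mvHasseDeriv k (p + q) = mvHasseDeriv k p + mvHasseDeriv k q := by
  simp only [mvHasseDeriv_eq_sum, AddMonoidAlgebra.coeff_add]
  exact Finsupp.sum_add_index' (by simp) (by simp [smul_add])

lemma mvHasseDeriv_monomial (k d : σ →₀ ℕ) (c : R) :
    mvHasseDeriv k (monomial d c) =
      monomial (d - k) ((k.prod fun i a => (d i).choose a) • c) := by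
  rw [mvHasseDeriv_eq_sum]
  exact sum_monomial_eq (by simp)

lemma mvHasseDeriv_mul_X_of_eq_zero {k : σ →₀ ℕ} {j : σ} (hj : k j = 0)
    (p : MvPolynomial σ R) :
    mvHasseDeriv k (p * X j) = mvHasseDeriv k p * X j := by
  induction p using MvPolynomial.induction_on' with
  | monomial d c =>
    rw [X, monomial_mul, mvHasseDeriv_monomial, mvHasseDeriv_monomial, monomial_mul, mul_one,
      mul_one, Finsupp.prod_choose_add_single_of_eq_zero _ _ hj]
    congr 2
    ext i
    by_cases hi : i = j
    · subst hi; simp [hj]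
    · simp [Ne.symm hi]
  | add p q hp hq => rw [add_mul, mvHasseDeriv_add, mvHasseDeriv_add, hp, hq, add_mul]

lemma mvHasseDeriv_add_single_mul_X (k : σ →₀ ℕ) (j : σ) (p : MvPolynomial σ R) :
    mvHasseDeriv (k + Finsupp.single j 1) (p * X j) =
      mvHasseDeriv (k + Finsupp.single j 1) p * X j + mvHasseDeriv k p := by
  induction p using MvPolynomial.induction_on' with
  | monomial d c =>
    rw [X, monomial_mul, mvHasseDeriv_monomial, mvHasseDeriv_monomial, mvHasseDeriv_monomial,
      monomial_mul, mul_one, mul_one, Finsupp.prod_choose_add_single_add_single, add_smul,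
      map_add, add_tsub_add_eq_tsub_right]
    congr 1
    by_cases hle : k + Finsupp.single j 1 ≤ d
    · rw [tsub_add_eq_add_tsub hle, add_tsub_add_eq_tsub_right]
    · rw [Finsupp.prod_choose_eq_zero_of_not_le hle, zero_smul, map_zero, map_zero]
  | add p q hp hq =>
    rw [add_mul, mvHasseDeriv_add, mvHasseDeriv_add, hp, hq, mvHasseDeriv_add, add_mul]
    abel

lemma eval_mvHasseDeriv (a : σ → R) (F : MvPolynomial σ R) (k : σ →₀ ℕ) :
    eval a (mvHasseDeriv k F) = coeff k (aeval (fun i => X i + C (a i)) F) := by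
  induction F using MvPolynomial.induction_on generalizing k with
  | C c =>
    rw [← monomial_zero', mvHasseDeriv_monomial, zero_tsub, eval_monomial, monomial_zero',
      aeval_C, algebraMap_eq, coeff_C]
    by_cases hk : k = 0
    · simp [hk]
    · rw [Finsupp.prod_choose_eq_zero_of_not_le (by simpa using hk), if_neg (Ne.symm hk)]
      simp
  | add p q hp hq => rw [mvHasseDeriv_add, map_add, map_add, coeff_add, hp, hq]
  | mul_X p j hp =>
    rw [map_mul, aeval_X, mul_add, coeff_add, mul_comm _ (C _), coeff_C_mul]
    by_cases hkj : k j = 0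
    · rw [mvHasseDeriv_mul_X_of_eq_zero hkj, map_mul, eval_X, hp, coeff_mul_X',
        if_neg (by simpa using hkj), zero_add, mul_comm]
    · obtain ⟨k, rfl⟩ : ∃ k', k = k' + Finsupp.single j 1 :=
        ⟨k - Finsupp.single j 1, (tsub_add_cancel_of_le (Finsupp.single_le_iff.mpr
          (Nat.one_le_iff_ne_zero.mpr hkj))).symm⟩
      rw [mvHasseDeriv_add_single_mul_X, map_add, map_mul, eval_X, hp, hp, coeff_mul_X]
      ring

end HasseDeriv

section Multiplicity

variable {σ R : Type*} [CommRing R] [DecidableEq σ]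

lemma multGE.mono {F : MvPolynomial σ R} {a : σ → R} {M N : ℕ} (h : multGE F a M)
    (hNM : N ≤ M) : multGE F a N :=
  fun k hk => h k (hk.trans_le hNM)

lemma multGE_of_prod_X_sub_C_pow_dvd {F : MvPolynomial σ R} {a : σ → R} (s : Finset σ)
    (q : σ → ℕ) (h : (∏ i ∈ s, (X i - C (a i)) ^ q i) ∣ F) : multGE F a (∑ i ∈ s, q i) := by
  obtain ⟨G, rfl⟩ := h
  intro k hk
  have htranslate : aeval (fun i => X i + C (a i)) (∏ i ∈ s, (X i - C (a i)) ^ q i) =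
      monomial (∑ i ∈ s, Finsupp.single i (q i)) (1 : R) := by
    simp [map_prod, monomial_sum_one, X_pow_eq_monomial]
  rw [eval_mvHasseDeriv, map_mul, htranslate, coeff_monomial_mul', if_neg]
  intro hle
  have hdeg := Finsupp.degree_mono hle
  simp only [map_sum, Finsupp.degree_single] at hdeg
  exact absurd hk (not_lt.mpr hdeg)

end Multiplicity

section VanishingPoly

variable {σ R : Type*} [CommRing R]

noncomputable def coordVanishingPoly (S : Finset R) (j : σ) (n : ℕ) : MvPolynomial σ R :=
  (∏ b ∈ S, (X j - C b)) ^ (n / S.card) * X j ^ (n % S.card)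

lemma monic_coordVanishingPoly (m : MonomialOrder σ) (S : Finset R) (j : σ) (n : ℕ) :
    m.Monic (coordVanishingPoly S j n) :=
  ((MonomialOrder.Monic.prod fun b _ => m.monic_X_sub_C j b).pow).mul m.monic_X.pow

lemma degree_coordVanishingPoly [IsDomain R] (m : MonomialOrder σ) (S : Finset R) (j : σ)
    (n : ℕ) : m.degree (coordVanishingPoly S j n) = Finsupp.single j n := by
  have hne : ∀ b ∈ S, (X j - C b : MvPolynomial σ R) ≠ 0 :=
    fun b _ => (m.monic_X_sub_C j b).ne_zero
  rw [coordVanishingPoly, m.degree_mul (pow_ne_zero _ (prod_ne_zero_iff.mpr hne))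
    (pow_ne_zero _ (X_ne_zero j)), m.degree_pow, m.degree_prod hne, m.degree_pow, m.degree_X]
  simp only [m.degree_X_sub_C, sum_const, Finsupp.smul_single, smul_eq_mul, mul_one,
    ← Finsupp.single_add]
  rw [mul_comm, Nat.div_add_mod]

lemma X_sub_C_pow_dvd_coordVanishingPoly {S : Finset R} {b : R} (hb : b ∈ S) (j : σ) (n : ℕ) :
    (X j - C b) ^ (n / S.card) ∣ coordVanishingPoly S j n :=
  dvd_mul_of_dvd_left (pow_dvd_pow_of_dvd (dvd_prod_of_mem _ hb) _) _

end VanishingPoly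

/-- if `⌊i_1/s_1⌋ + ⋯ + ⌊i_m/s_m⌋ ≥ r`, then there is a polynomial with
leading monomial `X_1^{i_1}⋯X_m^{i_m}` (w.r.t. the lexicographic ordering) which
vanishes with multiplicity at least `r` at every point of `S_1 × ⋯ × S_m`. -/
theorem exists_poly_high_multiplicity {m : ℕ} {K : Type*} [Field K]
    (S : Fin m → Finset K) (I : Fin m →₀ ℕ) (r : ℕ)
    (h : r ≤ ∑ j : Fin m, I j / (S j).card) :
    ∃ F : MvPolynomial (Fin m) K,
      F.coeff I ≠ 0 ∧ (∀ d ∈ F.support, toLex d ≤ toLex I) ∧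
      ∀ a ∈ Fintype.piFinset S, multGE F a r := by
  set F : MvPolynomial (Fin m) K := ∏ j, coordVanishingPoly (S j) j (I j)
  have hmonic : MonomialOrder.lex.Monic F :=
    MonomialOrder.Monic.prod fun j _ => monic_coordVanishingPoly _ _ _ _
  have hdeg : MonomialOrder.lex.degree F = I := by
    rw [MonomialOrder.degree_prod fun j _ => (monic_coordVanishingPoly .lex _ _ _).ne_zero]
    simp [degree_coordVanishingPoly, Finsupp.univ_sum_single]
  refine ⟨F, ?_, fun d hd => hdeg ▸ MonomialOrder.lex.le_degree hd, fun a ha => ?_⟩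
  · rw [← hdeg, hmonic.coeff_degree]
    exact one_ne_zero
  · refine (multGE_of_prod_X_sub_C_pow_dvd univ _ ?_).mono h
    exact prod_dvd_prod_of_dvd _ _ fun j _ =>
      X_sub_C_pow_dvd_coordVanishingPoly (Fintype.mem_piFinset.mp ha j) j (I j)
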